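/- arXiv:2511.10798 — 2 statements merged into one kernel-verified Lean document; each statement's English description precedes it below -/
import Mathlib

section
/- Let K: ℝ≥0 → ℝ be the sparse kernel K(d) = σ·[(2 + cos(2πd/D))/3 · (1 − d/D) + (1/(2π))·sin(2πd/D)] for d < D and K(d) = 0 otherwise, with σ > 0, D > 0. Then K is nonnegative: K(d) ≥ 0 for all d ≥ 0. -/
/-!
Substituting `x = 2π (1 - d / D)` turns the bracket of the kernel into
`(x (2 + cos x) - 3 sin x) / (6π)`, so nonnegativity is the Cusa–Huygens inequality
`3 sin x ≤ x (2 + cos x)` for `x ≥ 0`. On `[0, 2π]` the difference vanishes at `0` and has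
derivative `2 - 2 cos x - x sin x = 4 sin (x/2) (sin (x/2) - (x/2) cos (x/2)) ≥ 0`;
for `x ≥ 2π > 3` it is immediate.
-/

open Real Set

namespace Real

theorem mul_cos_le_sin {x : ℝ} (hx₀ : 0 ≤ x) (hxπ : x ≤ π) : x * cos x ≤ sin x := by
  have hsin : 0 ≤ sin x := sin_nonneg_of_nonneg_of_le_pi hx₀ hxπ
  rcases le_or_gt (cos x) 0 with hcos | hcos
  · nlinarith
  · have hx : x < π / 2 := by
      by_contra! h
      exact hcos.not_ge (cos_nonpos_of_pi_div_two_le_of_le h (by linarith))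
    calc x * cos x ≤ tan x * cos x := mul_le_mul_of_nonneg_right (le_tan hx₀ hx) hcos.le
      _ = sin x := tan_mul_cos hcos.ne'

theorem hasDerivAt_mul_two_add_cos_sub_three_mul_sin (x : ℝ) :
    HasDerivAt (fun x => x * (2 + cos x) - 3 * sin x) (2 - 2 * cos x - x * sin x) x := by
  refine (((hasDerivAt_id' x).mul ((hasDerivAt_cos x).const_add 2)).sub
    ((hasDerivAt_sin x).const_mul 3)).congr_deriv ?_
  ring

theorem two_sub_two_mul_cos_sub_mul_sin_nonneg {x : ℝ} (hx₀ : 0 ≤ x) (hx : x ≤ 2 * π) :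
    0 ≤ 2 - 2 * cos x - x * sin x := by
  obtain ⟨y, rfl⟩ : ∃ y, x = 2 * y := ⟨x / 2, by ring⟩
  have hy₀ : 0 ≤ y := by linarith
  have hyπ : y ≤ π := by linarith
  have hhalf : 2 - 2 * cos (2 * y) - 2 * y * sin (2 * y)
      = 4 * sin y * (sin y - y * cos y) := by
    rw [cos_two_mul, sin_two_mul]
    linear_combination (-4) * sin_sq_add_cos_sq y
  rw [hhalf]
  exact mul_nonneg (mul_nonneg zero_le_four (sin_nonneg_of_nonneg_of_le_pi hy₀ hyπ))
    (sub_nonneg.2 (mul_cos_le_sin hy₀ hyπ))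

/-- The Cusa–Huygens inequality. -/
theorem three_mul_sin_le_mul_two_add_cos {x : ℝ} (hx : 0 ≤ x) :
    3 * sin x ≤ x * (2 + cos x) := by
  rcases le_or_gt x (2 * π) with hx2π | hx2π
  · have hmono : MonotoneOn (fun x => x * (2 + cos x) - 3 * sin x) (Icc 0 (2 * π)) := by
      refine monotoneOn_of_hasDerivWithinAt_nonneg (convex_Icc 0 (2 * π))
        (fun x _ => (hasDerivAt_mul_two_add_cos_sub_three_mul_sin x).continuousAt
          |>.continuousWithinAt)
        (fun x _ => (hasDerivAt_mul_two_add_cos_sub_three_mul_sin x).hasDerivWithinAt) ?_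
      intro y hy
      rw [interior_Icc] at hy
      exact two_sub_two_mul_cos_sub_mul_sin_nonneg hy.1.le hy.2.le
    have h := hmono ⟨le_rfl, two_pi_pos.le⟩ ⟨hx, hx2π⟩ hx
    simp only [zero_mul, sin_zero, mul_zero, sub_zero] at h
    linarith
  · nlinarith [sin_le_one x, neg_one_le_cos x, pi_gt_three]

end Real

theorem sparse_profile_nonneg {t : ℝ} (ht : t ≤ 1) :
    0 ≤ (2 + cos (2 * π * t)) / 3 * (1 - t) + 1 / (2 * π) * sin (2 * π * t) := by
  set x := 2 * π * (1 - t) with hx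
  have hangle : 2 * π * t = 2 * π - x := by ring
  have hprofile : (2 + cos (2 * π * t)) / 3 * (1 - t) + 1 / (2 * π) * sin (2 * π * t)
      = (x * (2 + cos x) - 3 * sin x) / (6 * π) := by
    rw [hangle, cos_two_pi_sub, sin_two_pi_sub, hx]
    field_simp
    ring
  rw [hprofile]
  have hx₀ : 0 ≤ x := mul_nonneg (by positivity) (by linarith)
  exact div_nonneg (sub_nonneg.2 (three_mul_sin_le_mul_two_add_cos hx₀)) (by positivity)

/-- The sparse kernel is nonnegative for all `d ≥ 0`. -/
theorem sparse_kernel_nonneg (σ D : ℝ) (hσ : 0 < σ) (hD : 0 < D)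
    (K : ℝ → ℝ)
    (hK : ∀ d : ℝ, K d =
      if d < D then
        σ * ((2 + Real.cos (2 * Real.pi * d / D)) / 3 * (1 - d / D)
          + (1 / (2 * Real.pi)) * Real.sin (2 * Real.pi * d / D))
      else 0) :
    ∀ d : ℝ, 0 ≤ d → 0 ≤ K d := by
  intro d _
  rw [hK]
  split_ifs with hdD
  · have hprofile := sparse_profile_nonneg ((div_le_one hD).2 hdD.le)
    rw [← mul_div_assoc] at hprofile
    exact mul_nonneg hσ.le hprofile
  · exact le_rfl
end

section
/- Let the prior be p(w, {(m_i, τ_i)}) = D(w; a)·Π_{i=1}^K NΓ(m_i, τ_i; μ_i, λ_i, α_i, β_i) and the likelihood p(y | w, m, τ) = Σ_{i=1}^K w_i N(y; m_i, τ_i^{−1}). Then the posterior given observation y equals (1/M)·Σ_{j=1}^K u_j c_j* · D(w; a + e_j) · NΓ(m_j, τ_j; μ_j*, λ_j*, α_j*, β_j*) · Π_{i ≠ j} NΓ(m_i, τ_i; μ_i, λ_i, α_i, β_i), where u_j = a_j/Σ_i a_i, (μ_j*, λ_j*, α_j*, β_j*) is the single-observation normal-gamma update, c_j* the corresponding evidence,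 e_j the j-th standard basis vector, and M = Σ_j u_j c_j*. -/
open Real

/-- Gaussian density `N(y; m, τ⁻¹)` with precision `τ`. -/
noncomputable def gaussDensity (m τ y : ℝ) : ℝ :=
  Real.sqrt (τ / (2 * Real.pi)) * Real.exp (-τ * (y - m) ^ 2 / 2)

/-- The normalized normal-gamma density on `ℝ × ℝ_{>0}`. -/
noncomputable def nGammaDensity (μ lam α β : ℝ) (m τ : ℝ) : ℝ :=
  (β ^ α * Real.sqrt lam / (Real.Gamma α * Real.sqrt (2 * Real.pi))) *
    τ ^ (α - 1 / 2) * Real.exp (-β * τ - lam * τ * (m - μ) ^ 2 / 2)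

/-- The normalized Dirichlet density on the open simplex. -/
noncomputable def dirDensity {K : ℕ} (a : Fin K → ℝ) (w : Fin K → ℝ) : ℝ :=
  (Real.Gamma (∑ i, a i) / ∏ i, Real.Gamma (a i)) * ∏ i, w i ^ (a i - 1)

/-!
Conjugacy works one mixture component at a time. Expanding the likelihood
`∑ j w_j N(y; m_j, τ_j⁻¹)` against the prior, the `j`-th term only touches `w_j` and `(m_j, τ_j)`:
multiplying the Dirichlet density by `w_j` raises `a_j` by one at the cost of the factor
`a_j / ∑ a_i` (via `Γ(x + 1) = x Γ(x)`), and multiplying the `j`-th normal-gamma density by the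
Gaussian completes the square in `m_j`, giving the updated normal-gamma density times the
evidence `c_j*`.
-/

theorem Fintype.mul_prod_apply_add_ite {ι α M : Type*} [Fintype ι] [DecidableEq ι]
    [AddZeroClass α] [CommMonoid M] (f : ι → α → M) (a : ι → α) (j : ι) (b : α) :
    f j (a j) * ∏ i, f i (a i + if i = j then b else 0) = f j (a j + b) * ∏ i, f i (a i) := by
  have h_erase : ∏ i ∈ Finset.univ.erase j, f i (a i + if i = j then b else 0) =
      ∏ i ∈ Finset.univ.erase j, f i (a i) :=
    Finset.prod_congr rfl fun i hi => by rw [if_neg (Finset.ne_of_mem_erase hi), add_zero]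
  rw [← Finset.mul_prod_erase _ _ (Finset.mem_univ j),
    ← Finset.mul_prod_erase _ _ (Finset.mem_univ j), if_pos rfl, h_erase]
  ac_rfl

theorem mul_dirDensity {K : ℕ} (a : Fin K → ℝ) (ha : ∀ i, 0 < a i) (w : Fin K → ℝ)
    (hw : ∀ i, 0 < w i) (j : Fin K) :
    w j * dirDensity a w =
      (a j / ∑ i, a i) * dirDensity (fun i => a i + if i = j then 1 else 0) w := by
  have hsum_pos : 0 < ∑ i, a i := Finset.sum_pos (fun i _ => ha i) ⟨j, Finset.mem_univ j⟩
  have hsum : ∑ i, (a i + if i = j then 1 else 0) = (∑ i, a i) + 1 := by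
    simp [Finset.sum_add_distrib]
  have hGamma_prod : ∏ i, Gamma (a i + if i = j then 1 else 0) = a j * ∏ i, Gamma (a i) := by
    have h := Fintype.mul_prod_apply_add_ite (fun _ => Gamma) a j 1
    rw [Gamma_add_one (ha j).ne'] at h
    exact mul_left_cancel₀ (Gamma_pos_of_pos (ha j)).ne' (h.trans (by ring))
  have hpow_prod : ∏ i, w i ^ ((a i + if i = j then 1 else 0) - 1) =
      w j * ∏ i, w i ^ (a i - 1) := by
    have h := Fintype.mul_prod_apply_add_ite (fun i x => w i ^ (x - 1)) a j 1
    rw [show a j + 1 - 1 = a j - 1 + 1 by ring, rpow_add_one (hw j).ne'] at h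
    refine mul_left_cancel₀ (rpow_pos_of_pos (hw j) (a j - 1)).ne' (h.trans ?_)
    ring
  have hGamma_ne : ∏ i, Gamma (a i) ≠ 0 :=
    Finset.prod_ne_zero_iff.mpr fun i _ => (Gamma_pos_of_pos (ha i)).ne'
  unfold dirDensity
  rw [hsum, Gamma_add_one hsum_pos.ne', hGamma_prod, hpow_prod]
  field_simp [(ha j).ne']

theorem gauss_exponent_add_nGamma_exponent (μ lam β y m τ : ℝ) (hlam : lam + 1 ≠ 0) :
    -τ * (y - m) ^ 2 / 2 + (-β * τ - lam * τ * (m - μ) ^ 2 / 2) =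
      -(β + lam * (y - μ) ^ 2 / (2 * (1 + lam))) * τ -
        (lam + 1) * τ * (m - (lam * μ + y) / (lam + 1)) ^ 2 / 2 := by
  have hlam' : 1 + lam ≠ 0 := by rwa [add_comm]
  field_simp
  ring

theorem gaussDensity_mul_nGammaDensity (μ lam α β y m τ : ℝ) (hlam : 0 < lam) (hα : 0 < α)
    (hβ : 0 < β) (hτ : 0 < τ) :
    gaussDensity m τ y * nGammaDensity μ lam α β m τ =
      ((1 / √(2 * π)) * √(lam / (lam + 1)) * (Gamma (α + 1 / 2) / Gamma α) *
        (β ^ α / (β + lam * (y - μ) ^ 2 / (2 * (1 + lam))) ^ (α + 1 / 2))) *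
      nGammaDensity ((lam * μ + y) / (lam + 1)) (lam + 1) (α + 1 / 2)
        (β + lam * (y - μ) ^ 2 / (2 * (1 + lam))) m τ := by
  set βs := β + lam * (y - μ) ^ 2 / (2 * (1 + lam))
  have hβs : 0 < βs ^ (α + 1 / 2) := rpow_pos_of_pos (by positivity) _
  have hGamma : 0 < Gamma (α + 1 / 2) := Gamma_pos_of_pos (by positivity)
  have hτ_pow : τ ^ (α + 1 / 2 - 1 / 2) = √τ * τ ^ (α - 1 / 2) := by
    rw [sqrt_eq_rpow, ← rpow_add hτ]
    ring_nf
  unfold gaussDensity nGammaDensity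
  rw [sqrt_div' _ (by positivity), sqrt_div' _ (by positivity), hτ_pow,
    ← gauss_exponent_add_nGamma_exponent μ lam β y m τ (by positivity), exp_add]
  generalize βs ^ (α + 1 / 2) = B at hβs ⊢
  field_simp

theorem dirichlet_normal_gamma_mixture_posterior_general (K : ℕ)
    (a : Fin K → ℝ) (ha : ∀ i, 0 < a i)
    (μ lam α β : Fin K → ℝ)
    (hlam : ∀ i, 0 < lam i) (hα : ∀ i, 0 < α i) (hβ : ∀ i, 0 < β i)
    (y : ℝ)
    (μs lams αs βs cs u : Fin K → ℝ) (M : ℝ)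
    (hμs : ∀ j, μs j = (lam j * μ j + y) / (lam j + 1))
    (hlams : ∀ j, lams j = lam j + 1)
    (hαs : ∀ j, αs j = α j + 1 / 2)
    (hβs : ∀ j, βs j = β j + lam j * (y - μ j) ^ 2 / (2 * (1 + lam j)))
    (hcs : ∀ j, cs j = (1 / Real.sqrt (2 * Real.pi)) *
      Real.sqrt (lam j / lams j) * (Real.Gamma (αs j) / Real.Gamma (α j)) *
      (β j ^ α j / βs j ^ αs j))
    (hu : ∀ j, u j = a j / ∑ i, a i) :
    ∀ (w : Fin K → ℝ), (∀ i, 0 < w i) → (∑ i, w i = 1) →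
    ∀ (m τ : Fin K → ℝ), (∀ i, 0 < τ i) →
      ((∑ i, w i * gaussDensity (m i) (τ i) y) *
        (dirDensity a w * ∏ i, nGammaDensity (μ i) (lam i) (α i) (β i) (m i) (τ i))) / M =
      (1 / M) * ∑ j, u j * cs j *
        dirDensity (fun i => a i + if i = j then 1 else 0) w *
        nGammaDensity (μs j) (lams j) (αs j) (βs j) (m j) (τ j) *
        ∏ i ∈ Finset.univ.erase j,
          nGammaDensity (μ i) (lam i) (α i) (β i) (m i) (τ i) := by
  intro w hw _ m τ hτ
  rw [div_eq_inv_mul, one_div, Finset.sum_mul]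
  congr 1
  refine Finset.sum_congr rfl fun j _ => ?_
  have hconj : gaussDensity (m j) (τ j) y * nGammaDensity (μ j) (lam j) (α j) (β j) (m j) (τ j) =
      cs j * nGammaDensity (μs j) (lams j) (αs j) (βs j) (m j) (τ j) := by
    rw [hcs j, hμs j, hlams j, hαs j, hβs j]
    exact gaussDensity_mul_nGammaDensity _ _ _ _ y _ _ (hlam j) (hα j) (hβ j) (hτ j)
  have hdir :
      w j * dirDensity a w = u j * dirDensity (fun i => a i + if i = j then 1 else 0) w :=
    hu j ▸ mul_dirDensity a ha w hw j
  rw [← Finset.mul_prod_erase _ _ (Finset.mem_univ j)]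
  set rest := ∏ i ∈ Finset.univ.erase j, nGammaDensity (μ i) (lam i) (α i) (β i) (m i) (τ i)
  linear_combination (w j * dirDensity a w * rest) * hconj +
    (cs j * nGammaDensity (μs j) (lams j) (αs j) (βs j) (m j) (τ j) * rest) * hdir

/-- Lemma 3 (case `L = 1`): the posterior of a Dirichlet–normal-gamma prior
under a Gaussian-mixture likelihood, given observation `y`, equals the
`K`-component mixture `(1/M)·∑_j u_j c_j*·D(w; a+e_j)·NΓ(m_j,τ_j; μ_j*,λ_j*,α_j*,β_j*)
·∏_{i≠j} NΓ(m_i,τ_i; μ_i,λ_i,α_i,β_i)` with `u_j = a_j/∑ a_i`, `M = ∑ u_j c_j*`. -/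
theorem dirichlet_normal_gamma_mixture_posterior (K : ℕ) (hK : 0 < K)
    (a : Fin K → ℝ) (ha : ∀ i, 0 < a i)
    (μ lam α β : Fin K → ℝ)
    (hlam : ∀ i, 0 < lam i) (hα : ∀ i, 0 < α i) (hβ : ∀ i, 0 < β i)
    (y : ℝ)
    (μs lams αs βs cs u : Fin K → ℝ) (M : ℝ)
    (hμs : ∀ j, μs j = (lam j * μ j + y) / (lam j + 1))
    (hlams : ∀ j, lams j = lam j + 1)
    (hαs : ∀ j, αs j = α j + 1 / 2)
    (hβs : ∀ j, βs j = β j + lam j * (y - μ j) ^ 2 / (2 * (1 + lam j)))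
    (hcs : ∀ j, cs j = (1 / Real.sqrt (2 * Real.pi)) *
      Real.sqrt (lam j / lams j) * (Real.Gamma (αs j) / Real.Gamma (α j)) *
      (β j ^ α j / βs j ^ αs j))
    (hu : ∀ j, u j = a j / ∑ i, a i)
    (hM : M = ∑ j, u j * cs j) :
    ∀ (w : Fin K → ℝ), (∀ i, 0 < w i) → (∑ i, w i = 1) →
    ∀ (m τ : Fin K → ℝ), (∀ i, 0 < τ i) →
      ((∑ i, w i * gaussDensity (m i) (τ i) y) *
        (dirDensity a w * ∏ i, nGammaDensity (μ i) (lam i) (α i) (β i) (m i) (τ i))) / M =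
      (1 / M) * ∑ j, u j * cs j *
        dirDensity (fun i => a i + if i = j then 1 else 0) w *
        nGammaDensity (μs j) (lams j) (αs j) (βs j) (m j) (τ j) *
        ∏ i ∈ Finset.univ.erase j,
          nGammaDensity (μ i) (lam i) (α i) (β i) (m i) (τ i) :=
  dirichlet_normal_gamma_mixture_posterior_general K a ha μ lam α β hlam hα hβ y μs lams αs βs cs u
    M hμs hlams hαs hβs hcs hu
end
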